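/- (Propagation of the boundary tangency constraint F·N = 0.) Let ψ : ℝ×ℝ² → ℝ be C² and let v, F : ℝ×ℝ² → ℝ³ be C¹ (all functions of (t,x̄) with x̄=(x₁,x₂)). Set N(t,x̄) = (−∂₁ψ, −∂₂ψ, 1). Assume the kinematic boundary condition ∂ₜψ = v·N and the tangential transport equation (∂ₜ + v₁∂₁ + v₂∂₂)F = (F₁∂₁ + F₂∂₂)v hold on ℝ×ℝ². Then (∂ₜ + v₁∂₁ + v₂∂₂)(F·N) = 0 on ℝ×ℝ². Consequently F·N is constant along the horizontal flow of v̄=(v₁,v₂), so if F·N = 0 at t=0 it remains zero. -/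

import Mathlib

noncomputable section

/-- Scalar functions of `(t, x₁, x₂)`. -/
abbrev FnB : Type := ℝ → ℝ → ℝ → ℝ

/-- Time derivative `∂ₜ`. -/
def bt (f : FnB) : FnB := fun t x1 x2 => deriv (fun s => f s x1 x2) t

/-- Horizontal derivative `∂₁`. -/
def b1 (f : FnB) : FnB := fun t x1 x2 => deriv (fun y => f t y x2) x1

/-- Horizontal derivative `∂₂`. -/
def b2 (f : FnB) : FnB := fun t x1 x2 => deriv (fun y => f t x1 y) x2

/-- The boundary normal pairing `F·N = -F₁∂₁ψ - F₂∂₂ψ + F₃`. -/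
def dotN (ψ : FnB) (F : Fin 3 → FnB) : FnB := fun t x1 x2 =>
  F 0 t x1 x2 * (-(b1 ψ t x1 x2)) + F 1 t x1 x2 * (-(b2 ψ t x1 x2)) + F 2 t x1 x2

namespace TangencyAux

abbrev E3 : Type := ℝ × ℝ × ℝ

/-- Curried version of a scalar function. -/
def cur (f : FnB) : E3 → ℝ := fun p => f p.1 p.2.1 p.2.2

def eT : E3 := (1, 0, 0)
def e1 : E3 := (0, 1, 0)
def e2 : E3 := (0, 0, 1)

lemma hasDerivAt_lineT (x1 x2 t : ℝ) :
    HasDerivAt (fun s : ℝ => ((s, x1, x2) : E3)) eT t :=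
  (hasDerivAt_id t).prodMk (hasDerivAt_const t (x1, x2))

lemma hasDerivAt_line1 (t x2 x1 : ℝ) :
    HasDerivAt (fun y : ℝ => ((t, y, x2) : E3)) e1 x1 :=
  (hasDerivAt_const x1 t).prodMk ((hasDerivAt_id x1).prodMk (hasDerivAt_const x1 x2))

lemma hasDerivAt_line2 (t x1 x2 : ℝ) :
    HasDerivAt (fun y : ℝ => ((t, x1, y) : E3)) e2 x2 :=
  (hasDerivAt_const x2 t).prodMk ((hasDerivAt_const x2 x1).prodMk (hasDerivAt_id x2))

lemma bt_eq (f : FnB) (t x1 x2 : ℝ)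
    (hf : DifferentiableAt ℝ (cur f) (t, x1, x2)) :
    bt f t x1 x2 = fderiv ℝ (cur f) (t, x1, x2) eT :=
  by have := (hf.hasFDerivAt.comp_hasDerivAt t (hasDerivAt_lineT x1 x2 t)).deriv; exact this

lemma b1_eq (f : FnB) (t x1 x2 : ℝ)
    (hf : DifferentiableAt ℝ (cur f) (t, x1, x2)) :
    b1 f t x1 x2 = fderiv ℝ (cur f) (t, x1, x2) e1 :=
  by have := (hf.hasFDerivAt.comp_hasDerivAt x1 (hasDerivAt_line1 t x2 x1)).deriv; exact this

lemma b2_eq (f : FnB) (t x1 x2 : ℝ)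
    (hf : DifferentiableAt ℝ (cur f) (t, x1, x2)) :
    b2 f t x1 x2 = fderiv ℝ (cur f) (t, x1, x2) e2 :=
  by have := (hf.hasFDerivAt.comp_hasDerivAt x2 (hasDerivAt_line2 t x1 x2)).deriv; exact this

lemma apply_w (L : E3 →L[ℝ] ℝ) (a b : ℝ) :
    L (1, a, b) = L eT + a * L e1 + b * L e2 := by
  have h : ((1 : ℝ), a, b) = eT + a • e1 + b • e2 := by
    simp [eT, e1, e2, Prod.ext_iff]
  rw [h, map_add, map_add, map_smul, map_smul, smul_eq_mul, smul_eq_mul]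

lemma fderiv_mul_apply {f g : E3 → ℝ} {p : E3} (hf : DifferentiableAt ℝ f p)
    (hg : DifferentiableAt ℝ g p) (w : E3) :
    fderiv ℝ (fun q => f q * g q) p w
      = fderiv ℝ f p w * g p + f p * fderiv ℝ g p w := by
  rw [fderiv_fun_mul hf hg]
  simp [smul_eq_mul]
  ring

end TangencyAux

open TangencyAux in
/-- **Propagation of the boundary tangency constraint `F·N = 0`.**
Under the kinematic boundary condition `∂ₜψ = v·N` and the tangential transport equation
`(∂ₜ + v₁∂₁ + v₂∂₂)F = (F₁∂₁ + F₂∂₂)v`, the quantity `F·N` is transported: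
`(∂ₜ + v₁∂₁ + v₂∂₂)(F·N) = 0`. -/
theorem tangency_constraint_propagation (ψ : FnB) (v F : Fin 3 → FnB)
    (hψ : ContDiff ℝ 2 (fun p : ℝ × ℝ × ℝ => ψ p.1 p.2.1 p.2.2))
    (hv : ∀ i : Fin 3, ContDiff ℝ 1 (fun p : ℝ × ℝ × ℝ => v i p.1 p.2.1 p.2.2))
    (hF : ∀ i : Fin 3, ContDiff ℝ 1 (fun p : ℝ × ℝ × ℝ => F i p.1 p.2.1 p.2.2))
    (hkin : ∀ t x1 x2 : ℝ, bt ψ t x1 x2 = dotN ψ v t x1 x2)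
    (htrans : ∀ i : Fin 3, ∀ t x1 x2 : ℝ,
      bt (F i) t x1 x2 + v 0 t x1 x2 * b1 (F i) t x1 x2 + v 1 t x1 x2 * b2 (F i) t x1 x2
        = F 0 t x1 x2 * b1 (v i) t x1 x2 + F 1 t x1 x2 * b2 (v i) t x1 x2) :
    ∀ t x1 x2 : ℝ,
      bt (dotN ψ F) t x1 x2 + v 0 t x1 x2 * b1 (dotN ψ F) t x1 x2 +
        v 1 t x1 x2 * b2 (dotN ψ F) t x1 x2 = 0 := by
  intro t x1 x2
  set P : E3 := (t, x1, x2) with hP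
  set ψ' : E3 → ℝ := cur ψ with hψ'
  have hψC : ContDiff ℝ 2 ψ' := hψ
  have hψd : Differentiable ℝ ψ' := hψC.differentiable (by norm_num)
  have hDψC : ContDiff ℝ 1 (fderiv ℝ ψ') := hψC.fderiv_right (by norm_num)
  have hDψd : Differentiable ℝ (fderiv ℝ ψ') := hDψC.differentiable one_ne_zero
  -- the three first partials of ψ, as functions on E3
  set A0 : E3 → ℝ := fun p => fderiv ℝ ψ' p eT with hA0
  set A1 : E3 → ℝ := fun p => fderiv ℝ ψ' p e1 with hA1
  set A2 : E3 → ℝ := fun p => fderiv ℝ ψ' p e2 with hA2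
  have hA0d : Differentiable ℝ A0 := hDψd.clm_apply (differentiable_const eT)
  have hA1d : Differentiable ℝ A1 := hDψd.clm_apply (differentiable_const e1)
  have hA2d : Differentiable ℝ A2 := hDψd.clm_apply (differentiable_const e2)
  -- derivative of the partials in terms of the second fderiv
  have hAder : ∀ (c : E3) (w : E3),
      fderiv ℝ (fun p => fderiv ℝ ψ' p c) P w = fderiv ℝ (fderiv ℝ ψ') P w c := by
    intro c w
    rw [fderiv_clm_apply (hDψd P) (differentiableAt_const c)]
    simp
  -- symmetry of the second derivative
  have hsymm : ∀ u w : E3,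
      fderiv ℝ (fderiv ℝ ψ') P u w = fderiv ℝ (fderiv ℝ ψ') P w u :=
    hψC.contDiffAt.isSymmSndFDerivAt (by norm_num)
  -- curried components of F and v
  set F' : Fin 3 → E3 → ℝ := fun i => cur (F i) with hF'
  set v' : Fin 3 → E3 → ℝ := fun i => cur (v i) with hv'
  have hFd : ∀ i, Differentiable ℝ (F' i) := fun i => (hF i).differentiable one_ne_zero
  have hvd : ∀ i, Differentiable ℝ (v' i) := fun i => (hv i).differentiable one_ne_zero
  -- b1 ψ / b2 ψ as functions equal A1 / A2
  have hb1ψ : ∀ p : E3, b1 ψ p.1 p.2.1 p.2.2 = A1 p := fun p =>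
    b1_eq ψ p.1 p.2.1 p.2.2 (hψd _)
  have hb2ψ : ∀ p : E3, b2 ψ p.1 p.2.1 p.2.2 = A2 p := fun p =>
    b2_eq ψ p.1 p.2.1 p.2.2 (hψd _)
  -- curried dotN ψ F
  set G : E3 → ℝ := fun p => F' 0 p * (-(A1 p)) + F' 1 p * (-(A2 p)) + F' 2 p with hG
  have hGeq : cur (dotN ψ F) = G := by
    funext p
    simp only [cur, dotN, hG]
    rw [hb1ψ p, hb2ψ p]
    rfl
  have hGd : Differentiable ℝ G := by
    apply Differentiable.add
    apply Differentiable.add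
    · exact (hFd 0).mul hA1d.neg
    · exact (hFd 1).mul hA2d.neg
    · exact hFd 2
  -- the transport direction
  set a : ℝ := v 0 t x1 x2 with ha
  set b : ℝ := v 1 t x1 x2 with hb
  set w : E3 := (1, a, b) with hw
  -- LHS of the goal is fderiv G P w
  have hLHS : bt (dotN ψ F) t x1 x2 + a * b1 (dotN ψ F) t x1 x2
      + b * b2 (dotN ψ F) t x1 x2 = fderiv ℝ G P w := by
    rw [bt_eq _ _ _ _ (by rw [hGeq]; exact hGd P),
        b1_eq _ _ _ _ (by rw [hGeq]; exact hGd P),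
        b2_eq _ _ _ _ (by rw [hGeq]; exact hGd P), hGeq, hw, apply_w]
  rw [hLHS]
  -- expand fderiv G P w by the product rule
  have hexp : fderiv ℝ G P w
      = fderiv ℝ (F' 0) P w * (-(A1 P)) + F' 0 P * (-(fderiv ℝ A1 P w))
        + (fderiv ℝ (F' 1) P w * (-(A2 P)) + F' 1 P * (-(fderiv ℝ A2 P w)))
        + fderiv ℝ (F' 2) P w := by
    have h0 : G = fun p => (F' 0 p * (-(A1 p)) + F' 1 p * (-(A2 p))) + F' 2 p := by
      funext p; rw [hG]
    rw [h0, fderiv_fun_add (by exact (((hFd 0).mul hA1d.neg).add ((hFd 1).mul hA2d.neg)) P)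
        (hFd 2 P)]
    simp only [ContinuousLinearMap.add_apply]
    rw [fderiv_fun_add (by exact ((hFd 0).mul hA1d.neg) P) (by exact ((hFd 1).mul hA2d.neg) P)]
    simp only [ContinuousLinearMap.add_apply]
    rw [fderiv_mul_apply (g := fun p => -A1 p) (hFd 0 P) (hA1d.neg P),
      fderiv_mul_apply (g := fun p => -A2 p) (hFd 1 P) (hA2d.neg P)]
    rw [fderiv_fun_neg, fderiv_fun_neg]
    simp
  rw [hexp]
  -- transport equations in fderiv form
  have htrans' : ∀ i : Fin 3, fderiv ℝ (F' i) P w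
      = F' 0 P * fderiv ℝ (v' i) P e1 + F' 1 P * fderiv ℝ (v' i) P e2 := by
    intro i
    have h := htrans i t x1 x2
    rw [bt_eq (F i) t x1 x2 (hFd i P), b1_eq (F i) t x1 x2 (hFd i P),
        b2_eq (F i) t x1 x2 (hFd i P), b1_eq (v i) t x1 x2 (hvd i P),
        b2_eq (v i) t x1 x2 (hvd i P)] at h
    rw [hw, apply_w]
    exact h
  -- kinematic equation as a function identity: A0 = -v0 A1 - v1 A2 + v2
  have hkin' : A0 = fun p => v' 0 p * (-(A1 p)) + v' 1 p * (-(A2 p)) + v' 2 p := by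
    funext p
    have h := hkin p.1 p.2.1 p.2.2
    rw [bt_eq ψ p.1 p.2.1 p.2.2 (hψd _)] at h
    simp only [dotN] at h
    rw [hb1ψ p, hb2ψ p] at h
    exact h
  -- derivative of the kinematic identity in direction u (u = e1 or e2)
  have hkinD : ∀ u : E3, fderiv ℝ (fderiv ℝ ψ') P u eT
      = fderiv ℝ (v' 0) P u * (-(A1 P)) + v' 0 P * (-(fderiv ℝ A1 P u))
        + (fderiv ℝ (v' 1) P u * (-(A2 P)) + v' 1 P * (-(fderiv ℝ A2 P u)))
        + fderiv ℝ (v' 2) P u := by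
    intro u
    have hA0u : fderiv ℝ A0 P u = fderiv ℝ (fderiv ℝ ψ') P u eT := hAder eT u
    rw [← hA0u, hkin']
    have h0 : (fun p => v' 0 p * (-(A1 p)) + v' 1 p * (-(A2 p)) + v' 2 p)
        = fun p => (v' 0 p * (-(A1 p)) + v' 1 p * (-(A2 p))) + v' 2 p := rfl
    rw [h0, fderiv_fun_add (by exact (((hvd 0).mul hA1d.neg).add ((hvd 1).mul hA2d.neg)) P)
        (hvd 2 P)]
    simp only [ContinuousLinearMap.add_apply]
    rw [fderiv_fun_add (by exact ((hvd 0).mul hA1d.neg) P) (by exact ((hvd 1).mul hA2d.neg) P)]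
    simp only [ContinuousLinearMap.add_apply]
    rw [fderiv_mul_apply (g := fun p => -A1 p) (hvd 0 P) (hA1d.neg P),
      fderiv_mul_apply (g := fun p => -A2 p) (hvd 1 P) (hA2d.neg P)]
    rw [fderiv_fun_neg, fderiv_fun_neg]
    simp
  -- Compute fderiv A1 P w and fderiv A2 P w using symmetry + kinematic condition
  have hAw : ∀ u : E3, fderiv ℝ (fun p => fderiv ℝ ψ' p u) P w
      = fderiv ℝ (fderiv ℝ ψ') P u eT + a * fderiv ℝ (fderiv ℝ ψ') P u e1
        + b * fderiv ℝ (fderiv ℝ ψ') P u e2 := by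
    intro u
    rw [hAder u w, hsymm w u, hw]
    exact apply_w _ a b
  have hA1w : fderiv ℝ A1 P w
      = fderiv ℝ (v' 0) P e1 * (-(A1 P)) + v' 0 P * (-(fderiv ℝ A1 P e1))
        + (fderiv ℝ (v' 1) P e1 * (-(A2 P)) + v' 1 P * (-(fderiv ℝ A2 P e1)))
        + fderiv ℝ (v' 2) P e1
        + a * fderiv ℝ A1 P e1 + b * fderiv ℝ A2 P e1 := by
    have h := hAw e1
    rw [hkinD e1] at h
    have h1 : fderiv ℝ (fderiv ℝ ψ') P e1 e1 = fderiv ℝ A1 P e1 := (hAder e1 e1).symm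
    have h2 : fderiv ℝ (fderiv ℝ ψ') P e1 e2
        = fderiv ℝ A2 P e1 := (hAder e2 e1).symm
    rw [h1, h2] at h
    exact h
  have hA2w : fderiv ℝ A2 P w
      = fderiv ℝ (v' 0) P e2 * (-(A1 P)) + v' 0 P * (-(fderiv ℝ A1 P e2))
        + (fderiv ℝ (v' 1) P e2 * (-(A2 P)) + v' 1 P * (-(fderiv ℝ A2 P e2)))
        + fderiv ℝ (v' 2) P e2
        + a * fderiv ℝ A1 P e2 + b * fderiv ℝ A2 P e2 := by
    have h := hAw e2
    rw [hkinD e2] at h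
    have h1 : fderiv ℝ (fderiv ℝ ψ') P e2 e1 = fderiv ℝ A1 P e2 := (hAder e1 e2).symm
    have h2 : fderiv ℝ (fderiv ℝ ψ') P e2 e2 = fderiv ℝ A2 P e2 := (hAder e2 e2).symm
    rw [h1, h2] at h
    exact h
  -- identify a, b with the curried velocity components
  have hav : v' 0 P = a := rfl
  have hbv : v' 1 P = b := rfl
  rw [htrans' 0, htrans' 1, htrans' 2, hA1w, hA2w, hav, hbv]
  ring
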